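/- Let K be a separable complex Hilbert space, let (x_n)_{n∈ℕ} and (y_n)_{n∈ℕ} be orthonormal sequences in K, and let (a_n)_{n∈ℕ} and (b_n)_{n∈ℕ} be nonincreasing sequences of strictly positive real numbers tending to 0. Let A and B be the compact positive operators on K defined by A x = ∑_n a_n ⟨x, x_n⟩ x_n and B x = ∑_n b_n ⟨x, y_n⟩ y_n, and put H = K ⊕ K. If the systems (H; K ⊕ 0, graph(A)) and (H; K ⊕ 0, graph(B)) are boundedly isomorphic, then for every real α > 0 the series ∑_n a_n^α converges if and only if ∑_n b_n^α converges; in particular A and B belong to exactly the same Schatten classes C^α, so Sh(A) = Sh(B). -/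

import Mathlib

/-!
Because `V` preserves `K ⊕ 0`, so does `V⁻¹`, and reading off second coordinates of
`V (z, A z) ∈ graph B` factors `A = W B S` through bounded operators, with
`S z = (V (z, A z)).1` and `W u = (V⁻¹ (0, u)).2`. A min-max argument then gives
`aₙ ≤ ‖W‖ ‖S‖ bₙ`: on the `(n + 1)`-dimensional span of `x₀, …, xₙ` there is `z ≠ 0` with
`S z ⊥ y₀, …, yₙ₋₁`, hence `aₙ ‖z‖ ≤ ‖A z‖ ≤ ‖W‖ ‖B (S z)‖ ≤ ‖W‖ bₙ ‖S z‖ ≤ ‖W‖ bₙ ‖S‖ ‖z‖`.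
The same argument for `V⁻¹` bounds `bₙ` by a multiple of `aₙ`, so `∑ aₙ ^ α` and `∑ bₙ ^ α`
converge together.
-/

namespace Orthonormal

variable {𝕜 E ι : Type*} [RCLike 𝕜] [NormedAddCommGroup E] [InnerProductSpace 𝕜 E]
  {v : ι → E}

theorem norm_sum_smul_sq (hv : Orthonormal 𝕜 v) (c : ι → 𝕜) (s : Finset ι) :
    ‖∑ i ∈ s, c i • v i‖ ^ 2 = ∑ i ∈ s, ‖c i‖ ^ 2 := by
  simpa [LinearIsometry.toSpanSingleton_apply] using hv.orthogonalFamily.norm_sum c s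

theorem norm_sum_smul_le_of_norm_le (hv : Orthonormal 𝕜 v) {c d : ι → 𝕜} {s : Finset ι}
    (h : ∀ i ∈ s, ‖c i‖ ≤ ‖d i‖) : ‖∑ i ∈ s, c i • v i‖ ≤ ‖∑ i ∈ s, d i • v i‖ := by
  rw [← pow_le_pow_iff_left₀ (norm_nonneg _) (norm_nonneg _) two_ne_zero,
    hv.norm_sum_smul_sq, hv.norm_sum_smul_sq]
  exact Finset.sum_le_sum fun i hi => pow_le_pow_left₀ (norm_nonneg _) (h i hi) 2

theorem norm_sum_inner_smul_le (hv : Orthonormal 𝕜 v) (z : E) (s : Finset ι) :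
    ‖∑ i ∈ s, inner 𝕜 (v i) z • v i‖ ≤ ‖z‖ := by
  rw [← pow_le_pow_iff_left₀ (norm_nonneg _) (norm_nonneg _) two_ne_zero, hv.norm_sum_smul_sq]
  exact hv.sum_inner_products_le z

end Orthonormal

theorem norm_tsum_le_of_forall_norm_sum_le {ι E : Type*} [SeminormedAddCommGroup E]
    {f : ι → E} {C : ℝ} (hC : 0 ≤ C) (h : ∀ s : Finset ι, ‖∑ i ∈ s, f i‖ ≤ C) :
    ‖∑' i, f i‖ ≤ C := by
  by_cases hf : Summable f
  · exact le_of_tendsto' hf.hasSum.norm h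
  · simpa [tsum_eq_zero_of_not_summable hf] using hC

section Diagonal

variable {𝕜 E : Type*} [RCLike 𝕜] [NormedAddCommGroup E] [InnerProductSpace 𝕜 E]
  {x y : ℕ → E} {a b : ℕ → ℝ}

theorem apply_eq_smul_of_eq_tsum (hx : Orthonormal 𝕜 x) {A : E → E}
    (hA : ∀ z, A z = ∑' n, ((a n : 𝕜) * inner 𝕜 (x n) z) • x n) (m : ℕ) :
    A (x m) = (a m : 𝕜) • x m := by
  rw [hA, tsum_eq_single m fun n hn => by simp [hx.inner_eq_zero hn]]
  simp [hx.1 m]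

theorem mul_norm_le_norm_apply_sum_smul (hx : Orthonormal 𝕜 x) (ha : Antitone a)
    {n : ℕ} (han : 0 ≤ a n) (A : E →ₗ[𝕜] E) (hA : ∀ m, A (x m) = (a m : 𝕜) • x m)
    (e : Fin (n + 1) → 𝕜) :
    a n * ‖∑ i, e i • x i‖ ≤ ‖A (∑ i, e i • x i)‖ := by
  have hx' : Orthonormal 𝕜 fun i : Fin (n + 1) => x i := hx.comp _ Fin.val_injective
  have hAe : A (∑ i, e i • x i) = ∑ i : Fin (n + 1), ((a i : 𝕜) * e i) • x i := by
    simp [map_sum, map_smul, hA, smul_smul, mul_comm]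
  calc a n * ‖∑ i, e i • x i‖ = ‖∑ i : Fin (n + 1), ((a n : 𝕜) * e i) • x i‖ := by
        simp_rw [← smul_smul, ← Finset.smul_sum, norm_smul, RCLike.norm_ofReal, abs_of_nonneg han]
    _ ≤ ‖A (∑ i, e i • x i)‖ := by
        rw [hAe]
        refine hx'.norm_sum_smul_le_of_norm_le fun i _ => ?_
        simp only [norm_mul, RCLike.norm_ofReal, abs_of_nonneg han,
          abs_of_nonneg (han.trans (ha (Fin.is_le i)))]
        exact mul_le_mul_of_nonneg_right (ha (Fin.is_le i)) (norm_nonneg _)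

theorem norm_apply_le_of_inner_eq_zero (hy : Orthonormal 𝕜 y) (hb : Antitone b)
    (hb0 : ∀ n, 0 ≤ b n) {B : E → E}
    (hB : ∀ z, B z = ∑' m, ((b m : 𝕜) * inner 𝕜 (y m) z) • y m)
    {n : ℕ} {z : E} (hz : ∀ k < n, inner 𝕜 (y k) z = 0) : ‖B z‖ ≤ b n * ‖z‖ := by
  rw [hB]
  refine norm_tsum_le_of_forall_norm_sum_le (mul_nonneg (hb0 n) (norm_nonneg z)) fun s => ?_
  calc ‖∑ m ∈ s, ((b m : 𝕜) * inner 𝕜 (y m) z) • y m‖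
      ≤ ‖∑ m ∈ s, ((b n : 𝕜) * inner 𝕜 (y m) z) • y m‖ := by
        refine hy.norm_sum_smul_le_of_norm_le fun m _ => ?_
        rcases lt_or_ge m n with hmn | hnm
        · simp [hz m hmn]
        · simp only [norm_mul, RCLike.norm_ofReal, abs_of_nonneg (hb0 _)]
          exact mul_le_mul_of_nonneg_right (hb hnm) (norm_nonneg _)
    _ = b n * ‖∑ m ∈ s, inner 𝕜 (y m) z • y m‖ := by
        simp_rw [← smul_smul, ← Finset.smul_sum, norm_smul, RCLike.norm_ofReal,
          abs_of_nonneg (hb0 n)]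
    _ ≤ b n * ‖z‖ := mul_le_mul_of_nonneg_left (hy.norm_sum_inner_smul_le z s) (hb0 n)

theorem le_norm_mul_norm_mul_of_apply_eq_comp (hx : Orthonormal 𝕜 x) (hy : Orthonormal 𝕜 y)
    (ha : Antitone a) (ha0 : ∀ n, 0 ≤ a n) (hb : Antitone b) (hb0 : ∀ n, 0 ≤ b n)
    (A : E →ₗ[𝕜] E) (hA : ∀ m, A (x m) = (a m : 𝕜) • x m) {B : E → E}
    (hB : ∀ z, B z = ∑' m, ((b m : 𝕜) * inner 𝕜 (y m) z) • y m)
    (S W : E →L[𝕜] E) (hASW : ∀ z, A z = W (B (S z))) (n : ℕ) :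
    a n ≤ ‖W‖ * ‖S‖ * b n := by
  let φ : (Fin (n + 1) → 𝕜) →ₗ[𝕜] (Fin n → 𝕜) := LinearMap.pi fun k =>
    innerₛₗ 𝕜 (y k) ∘ₗ (S : E →ₗ[𝕜] E) ∘ₗ Fintype.linearCombination 𝕜 fun i : Fin (n + 1) => x i
  -- `n` linear conditions on `n + 1` coefficients have a nontrivial solution
  obtain ⟨e, he, hφe⟩ : ∃ e, e ∈ LinearMap.ker φ ∧ e ≠ 0 :=
    Submodule.exists_mem_ne_zero_of_ne_bot (LinearMap.ker_ne_bot_of_finrank_lt (by simp))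
  set z := ∑ i, e i • x i with hz
  have hz0 : z ≠ 0 := fun h => hφe <| funext <|
    Fintype.linearIndependent_iff.1 (hx.comp _ Fin.val_injective).linearIndependent e h
  have hSz : ∀ k < n, inner 𝕜 (y k) (S z) = 0 := fun k hk => by
    simpa [φ, hz, Fintype.linearCombination_apply] using congrFun he ⟨k, hk⟩
  refine le_of_mul_le_mul_right ?_ (norm_pos_iff.2 hz0)
  calc a n * ‖z‖ ≤ ‖A z‖ := mul_norm_le_norm_apply_sum_smul hx ha (ha0 n) A hA e
    _ = ‖W (B (S z))‖ := by rw [hASW]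
    _ ≤ ‖W‖ * (b n * ‖S z‖) :=
        (W.le_opNorm _).trans (mul_le_mul_of_nonneg_left
          (norm_apply_le_of_inner_eq_zero hy hb hb0 hB hSz) (norm_nonneg W))
    _ ≤ ‖W‖ * (b n * (‖S‖ * ‖z‖)) := by gcongr; exacts [hb0 n, S.le_opNorm z]
    _ = ‖W‖ * ‖S‖ * b n * ‖z‖ := by ring

end Diagonal

theorem exists_apply_eq_comp_of_image_graph_eq {R M N M' N' : Type*} [Ring R]
    [TopologicalSpace M] [AddCommGroup M] [Module R M] [TopologicalSpace N] [AddCommGroup N]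
    [Module R N] [TopologicalSpace M'] [AddCommGroup M'] [Module R M'] [TopologicalSpace N']
    [AddCommGroup N'] [Module R N'] (V : (M × N) ≃L[R] (M' × N')) {A : M →L[R] N}
    {B : M' →L[R] N'}
    (hV : V '' ((⊤ : Submodule R M).prod (⊥ : Submodule R N) : Set (M × N)) =
      ((⊤ : Submodule R M').prod (⊥ : Submodule R N') : Set (M' × N')))
    (hVAB : V '' (LinearMap.graph (A : M →ₗ[R] N) : Set (M × N)) =
      (LinearMap.graph (B : M' →ₗ[R] N') : Set (M' × N'))) :
    ∃ (S : M →L[R] M') (W : N' →L[R] N), ∀ z, A z = W (B (S z)) := by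
  refine ⟨.fst R M' N' ∘L (V : (M × N) →L[R] (M' × N')) ∘L (ContinuousLinearMap.id R M).prod A,
    .snd R M N ∘L (V.symm : (M' × N') →L[R] (M × N)) ∘L .inr R M' N', fun z => ?_⟩
  set u := (V (z, A z)).1
  have hVz : V (z, A z) = (u, B u) := by
    have : V (z, A z) ∈ (LinearMap.graph (B : M' →ₗ[R] N') : Set (M' × N')) :=
      hVAB ▸ ⟨(z, A z), by simp [LinearMap.mem_graph_iff], rfl⟩
    exact Prod.ext rfl ((LinearMap.mem_graph_iff _ _).1 this)
  have hu : (V.symm (u, 0)).2 = 0 := by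
    obtain ⟨p, hp, hpu⟩ : (u, (0 : N')) ∈
        V '' ((⊤ : Submodule R M).prod (⊥ : Submodule R N) : Set (M × N)) := by
      rw [hV]; simp
    rw [← hpu, V.symm_apply_apply]
    simpa using hp
  calc A z = (V.symm (V (z, A z))).2 := by rw [V.symm_apply_apply]
    _ = (V.symm (u, 0)).2 + (V.symm (0, B u)).2 := by
      rw [hVz, ← Prod.snd_add, ← map_add, Prod.mk_add_mk, add_zero, zero_add]
    _ = _ := by simp [hu, u]

theorem summable_rpow_of_le_mul {ι : Type*} {a b : ι → ℝ} {C α : ℝ} (ha : ∀ i, 0 ≤ a i)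
    (hb : ∀ i, 0 ≤ b i) (hC : 0 ≤ C) (hα : 0 ≤ α) (hab : ∀ i, a i ≤ C * b i)
    (hsum : Summable fun i => b i ^ α) : Summable fun i => a i ^ α := by
  refine .of_nonneg_of_le (fun i => Real.rpow_nonneg (ha i) α) (fun i => ?_) (hsum.mul_left (C ^ α))
  calc a i ^ α ≤ (C * b i) ^ α := Real.rpow_le_rpow (ha i) (hab i) hα
    _ = C ^ α * b i ^ α := Real.mul_rpow hC (hb i)

theorem boundedly_isomorphic_graphs_same_schatten_classes
    {K : Type*} [NormedAddCommGroup K] [InnerProductSpace ℂ K]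
    (xseq yseq : ℕ → K) (hx : Orthonormal ℂ xseq) (hy : Orthonormal ℂ yseq)
    (a b : ℕ → ℝ)
    (ha_anti : Antitone a) (hb_anti : Antitone b)
    (ha_pos : ∀ n, 0 < a n) (hb_pos : ∀ n, 0 < b n)
    (A B : K →L[ℂ] K)
    (hA : ∀ x : K, A x = ∑' n : ℕ, ((a n : ℂ) * (inner ℂ (xseq n) x : ℂ)) • xseq n)
    (hB : ∀ x : K, B x = ∑' n : ℕ, ((b n : ℂ) * (inner ℂ (yseq n) x : ℂ)) • yseq n)
    (hiso : ∃ V : (K × K) ≃L[ℂ] (K × K),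
      V '' (((⊤ : Submodule ℂ K).prod (⊥ : Submodule ℂ K)) : Set (K × K)) =
        (((⊤ : Submodule ℂ K).prod (⊥ : Submodule ℂ K)) : Set (K × K)) ∧
      V '' ((LinearMap.graph (A : K →ₗ[ℂ] K)) : Set (K × K)) =
        ((LinearMap.graph (B : K →ₗ[ℂ] K)) : Set (K × K))) :
    ∀ α : ℝ, 0 < α → ((Summable fun n => a n ^ α) ↔ (Summable fun n => b n ^ α)) := by
  obtain ⟨V, hV, hVAB⟩ := hiso
  have ha0 n := (ha_pos n).le
  have hb0 n := (hb_pos n).le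
  obtain ⟨S, W, hASW⟩ := exists_apply_eq_comp_of_image_graph_eq V hV hVAB
  obtain ⟨S', W', hBSW⟩ := exists_apply_eq_comp_of_image_graph_eq V.symm
    ((V.toEquiv.eq_image_iff_symm_image_eq _ _).1 hV.symm)
    ((V.toEquiv.eq_image_iff_symm_image_eq _ _).1 hVAB.symm)
  have hab := le_norm_mul_norm_mul_of_apply_eq_comp hx hy ha_anti ha0 hb_anti hb0 A
    (apply_eq_smul_of_eq_tsum hx hA) hB S W hASW
  have hba := le_norm_mul_norm_mul_of_apply_eq_comp hy hx hb_anti hb0 ha_anti ha0 B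
    (apply_eq_smul_of_eq_tsum hy hB) hA S' W' hBSW
  intro α hα
  exact ⟨summable_rpow_of_le_mul hb0 ha0 (by positivity) hα.le hba,
    summable_rpow_of_le_mul ha0 hb0 (by positivity) hα.le hab⟩
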